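/- Let n ≥ 1 and D ≥ 3 be integers, and let β_0, …, β_n be real numbers with β_1 = 0 which satisfy, for every integer p with 0 ≤ p ≤ n−2, ((D−2)²/(2D²))·(p+1)·(p+2)·β_{p+2} − (2(D−1)(D−2)/D)·(p+1)·(n−p−1)·β_{p+1} + 2(D−1)²·(n−p)·(n−p−1)·β_p = 0. Then β_p = β_0 · (−2^p·(p−1)·binom(n,p)·(D(D−1)/(D−2))^p) for every 0 ≤ p ≤ n. -/

import Mathlib

/-! The constraints are, up to the nonzero factor `(D-2)²/(2D²)`, the three-term recurrence
`(p+1)(p+2) β_{p+2} - 2y (p+1)(n-p-1) β_{p+1} + y² (n-p)(n-p-1) β_p = 0` with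
`y = 2D(D-1)/(D-2)`. Its leading coefficient never vanishes, so a solution is determined by
`β_0` and `β_1`; and `(1-p) C(n,p) y^p` is a solution vanishing at `p = 1`. -/

variable {K : Type*} [CommRing K]

lemma Nat.cast_choose_succ_right_eq (n k : ℕ) :
    (n.choose (k + 1) : K) * (k + 1) = n.choose k * (n - k) := by
  rcases le_or_gt k n with hk | hk
  · have h := congrArg (Nat.cast : ℕ → K) (Nat.choose_succ_right_eq n k)
    push_cast [Nat.cast_sub hk] at h
    exact h
  · simp [Nat.choose_eq_zero_of_lt hk, Nat.choose_eq_zero_of_lt (Nat.lt_succ_of_lt hk)]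

def BinomialRecurrence (n : ℕ) (y : K) (β : ℕ → K) : Prop :=
  ∀ p : ℕ, p + 2 ≤ n →
    ((p : K) + 1) * ((p : K) + 2) * β (p + 2)
      - 2 * y * ((p : K) + 1) * ((n : K) - p - 1) * β (p + 1)
      + y ^ 2 * ((n : K) - p) * ((n : K) - p - 1) * β p = 0

namespace BinomialRecurrence

variable {n : ℕ} {y : K}

theorem eq_of_eq_at_zero_one [IsDomain K] [CharZero K] {β γ : ℕ → K} (hβ : BinomialRecurrence n y β)
    (hγ : BinomialRecurrence n y γ) (h0 : β 0 = γ 0) (h1 : β 1 = γ 1) :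
    ∀ p ≤ n, β p = γ p := by
  intro p
  induction p using Nat.strong_induction_on with
  | _ p ih =>
    match p with
    | 0 => exact fun _ ↦ h0
    | 1 => exact fun _ ↦ h1
    | q + 2 =>
      intro hq
      have hlead : ((q : K) + 1) * ((q : K) + 2) ≠ 0 :=
        mul_ne_zero (by norm_cast) (by norm_cast)
      refine mul_left_cancel₀ hlead ?_
      linear_combination (hβ q hq) - (hγ q hq)
        + 2 * y * ((q : K) + 1) * ((n : K) - q - 1) * ih (q + 1) (by omega) (by omega)
        - y ^ 2 * ((n : K) - q) * ((n : K) - q - 1) * ih q (by omega) (by omega)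

theorem const_mul {β : ℕ → K} (hβ : BinomialRecurrence n y β) (c : K) :
    BinomialRecurrence n y (fun p ↦ c * β p) := fun p hp ↦ by
  linear_combination c * hβ p hp

theorem one_sub_mul_choose_mul_pow (n : ℕ) (y : K) :
    BinomialRecurrence n y (fun p ↦ (1 - (p : K)) * n.choose p * y ^ p) := fun p _ ↦ by
  have h1 := Nat.cast_choose_succ_right_eq (K := K) n p
  have h2 := Nat.cast_choose_succ_right_eq (K := K) n (p + 1)
  push_cast at h2 ⊢
  linear_combination (-((p : K) + 1) ^ 2 * y ^ (p + 2)) * h2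
    + (((n : K) - p - 1) * ((p : K) - 1) * y ^ (p + 2)) * h1

end BinomialRecurrence

theorem stmt_1 (n D : ℕ) (hD : 3 ≤ D) (β : ℕ → ℝ)
    (hβ1 : β 1 = 0)
    (hcon : ∀ p : ℕ, p + 2 ≤ n →
      ((D : ℝ) - 2) ^ 2 / (2 * (D : ℝ) ^ 2) * ((p : ℝ) + 1) * ((p : ℝ) + 2) * β (p + 2)
        - 2 * ((D : ℝ) - 1) * ((D : ℝ) - 2) / (D : ℝ) * ((p : ℝ) + 1) *
            ((n : ℝ) - (p : ℝ) - 1) * β (p + 1)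
        + 2 * ((D : ℝ) - 1) ^ 2 * ((n : ℝ) - (p : ℝ)) * ((n : ℝ) - (p : ℝ) - 1) * β p = 0) :
    ∀ p : ℕ, p ≤ n →
      β p = β 0 * (-(2 : ℝ) ^ p * ((p : ℝ) - 1) * (n.choose p : ℝ) *
        ((D : ℝ) * ((D : ℝ) - 1) / ((D : ℝ) - 2)) ^ p) := by
  have hD3 : (3 : ℝ) ≤ D := by exact_mod_cast hD
  have hD2 : (D : ℝ) - 2 ≠ 0 := by linarith [hD3]
  have hD0 : (D : ℝ) ≠ 0 := by linarith [hD3]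
  set x := (D : ℝ) * ((D : ℝ) - 1) / ((D : ℝ) - 2) with hx
  have hrec : BinomialRecurrence n (2 * x) β := fun p hp ↦ by
    have hscale : ((D : ℝ) - 2) ^ 2 / (2 * (D : ℝ) ^ 2) ≠ 0 := by positivity
    refine mul_left_cancel₀ hscale ?_
    rw [mul_zero, ← hcon p hp, hx]
    field_simp
  have hsol := (BinomialRecurrence.one_sub_mul_choose_mul_pow n (2 * x)).const_mul (β 0)
  intro p hp
  rw [hrec.eq_of_eq_at_zero_one hsol (by simp) (by simp [hβ1]) p hp, mul_pow]
  ring
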